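/- Let X, Y, M be finite-valued random variables such that the joint distribution p_{XY} has full support (p(x,y) > 0 for all x ∈ 𝒳, y ∈ 𝒴), I(M; Y | X) = 0, and I(M; X | Y) = 0. Then I(M; (X, Y)) = 0. -/

import Mathlib

open scoped BigOperators

noncomputable section

/-- Probability that the random variable `X` takes the value `a`,
with respect to the probability mass function `p` on the finite sample space `Ω`. -/
def prob {Ω : Type*} [Fintype Ω] {α : Type*} [DecidableEq α]
    (p : Ω → ℝ) (X : Ω → α) (a : α) : ℝ :=
  ∑ ω, if X ω = a then p ω else 0

/-- Shannon entropy (base 2) of the random variable `X`. -/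
def ent {Ω : Type*} [Fintype Ω] {α : Type*} [Fintype α] [DecidableEq α]
    (p : Ω → ℝ) (X : Ω → α) : ℝ :=
  -∑ a, prob p X a * Real.logb 2 (prob p X a)

/-- Conditional entropy `H(X|Y)`. -/
def condEnt {Ω : Type*} [Fintype Ω] {α β : Type*} [Fintype α] [DecidableEq α]
    [Fintype β] [DecidableEq β] (p : Ω → ℝ) (X : Ω → α) (Y : Ω → β) : ℝ :=
  ent p (fun ω => (X ω, Y ω)) - ent p Y

/-- Mutual information `I(X;Y)`. -/
def mi {Ω : Type*} [Fintype Ω] {α β : Type*} [Fintype α] [DecidableEq α]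
    [Fintype β] [DecidableEq β] (p : Ω → ℝ) (X : Ω → α) (Y : Ω → β) : ℝ :=
  ent p X + ent p Y - ent p (fun ω => (X ω, Y ω))

/-- Conditional mutual information `I(X;Y|Z)`. -/
def cmi {Ω : Type*} [Fintype Ω] {α β γ : Type*} [Fintype α] [DecidableEq α]
    [Fintype β] [DecidableEq β] [Fintype γ] [DecidableEq γ]
    (p : Ω → ℝ) (X : Ω → α) (Y : Ω → β) (Z : Ω → γ) : ℝ :=
  ent p (fun ω => (X ω, Z ω)) + ent p (fun ω => (Y ω, Z ω))
    - ent p (fun ω => (X ω, Y ω, Z ω)) - ent p Z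

/-!
Conditional mutual information `I(U;V|W)` is the Kullback–Leibler divergence of `p_{UVW}` from
`p_{U|W} p_{V|W} p_W`, so by Gibbs' inequality it vanishes only if `U` and `V` are conditionally
independent given `W`. Hence `p(m|x,y) = p(m|x)` and `p(m|x,y) = p(m|y)`. Full support makes
`p(m|x,y)` defined for every pair, so `p(m|x) = p(m|y)` for all `x, y`: it depends on neither input,
hence equals `p(m)`, i.e. `M` is independent of `(X, Y)`.
-/

section InformationMeasures

open Real InformationTheory

variable {Ω α β γ τ : Type*} [Fintype Ω]

def IndepRV [DecidableEq α] [DecidableEq β] (p : Ω → ℝ) (A : Ω → α) (B : Ω → β) : Prop :=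
  ∀ a b, prob p (fun ω => (A ω, B ω)) (a, b) = prob p A a * prob p B b

def CondIndepRV [DecidableEq α] [DecidableEq β] [DecidableEq γ]
    (p : Ω → ℝ) (U : Ω → γ) (V : Ω → β) (W : Ω → α) : Prop :=
  ∀ u v w, prob p (fun ω => (U ω, V ω, W ω)) (u, v, w) * prob p W w =
    prob p (fun ω => (U ω, W ω)) (u, w) * prob p (fun ω => (V ω, W ω)) (v, w)

/-- The law `p_{U|W} p_{V|W} p_W` under which `U` and `V` are conditionally independent given
`W`, with the same `(U, W)` and `(V, W)` marginals as `p`. -/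
def condIndepProb [DecidableEq α] [DecidableEq β] [DecidableEq γ]
    (p : Ω → ℝ) (U : Ω → γ) (V : Ω → β) (W : Ω → α) (t : γ × β × α) : ℝ :=
  prob p (fun ω => (U ω, W ω)) (t.1, t.2.2) * prob p (fun ω => (V ω, W ω)) (t.2.1, t.2.2) /
    prob p W t.2.2

section prob

variable (p : Ω → ℝ)

lemma prob_nonneg [DecidableEq α] (hp : ∀ ω, 0 ≤ p ω) (X : Ω → α) (a : α) :
    0 ≤ prob p X a :=
  Finset.sum_nonneg fun ω _ => by split_ifs <;> simp [hp ω]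

lemma prob_le_prob_of_imp [DecidableEq α] [DecidableEq β] (hp : ∀ ω, 0 ≤ p ω)
    {S : Ω → α} {T : Ω → β} {s : α} {t : β} (h : ∀ ω, T ω = t → S ω = s) :
    prob p T t ≤ prob p S s :=
  Finset.sum_le_sum fun ω _ => by
    by_cases hT : T ω = t
    · simp [hT, h ω hT]
    · simp only [hT, if_false]
      split_ifs <;> simp [hp ω]

lemma prob_pos_of_prob_pos [DecidableEq α] [DecidableEq β] (hp : ∀ ω, 0 ≤ p ω)
    {S : Ω → α} {T : Ω → β} {s : α} {t : β} (h : ∀ ω, T ω = t → S ω = s)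
    (ht : 0 < prob p T t) : 0 < prob p S s :=
  ht.trans_le (prob_le_prob_of_imp p hp h)

lemma prob_eq_zero_of_imp [DecidableEq α] [DecidableEq β] (hp : ∀ ω, 0 ≤ p ω)
    {S : Ω → α} {T : Ω → β} {s : α} {t : β} (h : ∀ ω, T ω = t → S ω = s)
    (hs : prob p S s = 0) : prob p T t = 0 :=
  le_antisymm (hs ▸ prob_le_prob_of_imp p hp h) (prob_nonneg p hp T t)

lemma prob_congr [DecidableEq α] [DecidableEq β] {S : Ω → α} {T : Ω → β} {s : α} {t : β}
    (h : ∀ ω, S ω = s ↔ T ω = t) : prob p S s = prob p T t :=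
  Finset.sum_congr rfl fun ω _ => if_congr (h ω) rfl rfl

lemma prob_swap [DecidableEq α] [DecidableEq β] (A : Ω → α) (B : Ω → β) (a : α) (b : β) :
    prob p (fun ω => (B ω, A ω)) (b, a) = prob p (fun ω => (A ω, B ω)) (a, b) :=
  prob_congr p fun ω => by simp only [Prod.mk.injEq, and_comm]

lemma sum_prob_mul [Fintype α] [DecidableEq α] (X : Ω → α) (g : α → ℝ) :
    ∑ a, prob p X a * g a = ∑ ω, p ω * g (X ω) := by
  simp only [prob, Finset.sum_mul, ite_mul, zero_mul]
  rw [Finset.sum_comm]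
  simp

lemma sum_prob [Fintype α] [DecidableEq α] (X : Ω → α) : ∑ a, prob p X a = ∑ ω, p ω := by
  simpa using sum_prob_mul p X fun _ => 1

lemma sum_prob_pair_right [Fintype β] [DecidableEq α] [DecidableEq β]
    (A : Ω → α) (B : Ω → β) (a : α) :
    ∑ b, prob p (fun ω => (A ω, B ω)) (a, b) = prob p A a := by
  simp only [prob]
  rw [Finset.sum_comm]
  simp [Prod.ext_iff, ite_and]

lemma sum_prob_pair_left [Fintype α] [DecidableEq α] [DecidableEq β]
    (A : Ω → α) (B : Ω → β) (b : β) :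
    ∑ a, prob p (fun ω => (A ω, B ω)) (a, b) = prob p B b := by
  rw [← sum_prob_pair_right p B A b]
  exact Finset.sum_congr rfl fun a _ => prob_swap p B A b a

lemma ent_eq_sum_prob_comp [Fintype α] [DecidableEq α] [Fintype τ] [DecidableEq τ]
    {X : Ω → α} (T : Ω → τ) (φ : τ → α) (hX : ∀ ω, X ω = φ (T ω)) :
    ent p X = -∑ t, prob p T t * logb 2 (prob p X (φ t)) := by
  rw [ent, sum_prob_mul p X fun a => logb 2 (prob p X a),
    sum_prob_mul p T fun t => logb 2 (prob p X (φ t))]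
  simp only [hX]

lemma condIndepProb_nonneg [DecidableEq α] [DecidableEq β] [DecidableEq γ]
    {U : Ω → γ} {V : Ω → β} {W : Ω → α} (hp : ∀ ω, 0 ≤ p ω) (t : γ × β × α) :
    0 ≤ condIndepProb p U V W t :=
  div_nonneg (mul_nonneg (prob_nonneg p hp _ _) (prob_nonneg p hp _ _)) (prob_nonneg p hp _ _)

lemma prob_eq_zero_of_condIndepProb_eq_zero [DecidableEq α] [DecidableEq β] [DecidableEq γ]
    {U : Ω → γ} {V : Ω → β} {W : Ω → α} (hp : ∀ ω, 0 ≤ p ω) (t : γ × β × α)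
    (ht : condIndepProb p U V W t = 0) :
    prob p (fun ω => (U ω, V ω, W ω)) t = 0 := by
  obtain ⟨u, v, w⟩ := t
  simp only [condIndepProb, div_eq_zero_iff, mul_eq_zero] at ht
  rcases ht with (hUW | hVW) | hW
  · exact prob_eq_zero_of_imp p hp (fun ω h => by simp_all) hUW
  · exact prob_eq_zero_of_imp p hp (fun ω h => by simp_all) hVW
  · exact prob_eq_zero_of_imp p hp (fun ω h => by simp_all) hW

end prob

lemma eq_of_sum_mul_log_div_eq_zero {ι : Type*} [Fintype ι] {a b : ι → ℝ}
    (ha : ∀ i, 0 ≤ a i) (hb : ∀ i, 0 ≤ b i) (hab : ∀ i, b i = 0 → a i = 0)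
    (hsum : ∑ i, a i = ∑ i, b i) (h : ∑ i, a i * log (a i / b i) = 0) (i : ι) :
    a i = b i := by
  have hkl : ∀ i, a i * log (a i / b i) = b i * klFun (a i / b i) + (a i - b i) := by
    intro i
    by_cases hbi : b i = 0
    · simp [hbi, hab i hbi]
    · rw [klFun_apply]
      field_simp
      ring
  have hzero : ∑ i, b i * klFun (a i / b i) = 0 := by
    simpa [hkl, Finset.sum_add_distrib, hsum] using h
  have hterm := (Finset.sum_eq_zero_iff_of_nonneg fun i _ =>
    mul_nonneg (hb i) (klFun_nonneg (div_nonneg (ha i) (hb i)))).mp hzero i (Finset.mem_univ i)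
  rcases mul_eq_zero.mp hterm with hbi | hkli
  · rw [hbi, hab i hbi]
  · exact (div_eq_one_iff_eq fun hbi => by simp [hbi, klFun_zero] at hkli).mp
      ((klFun_eq_zero_iff (div_nonneg (ha i) (hb i))).mp hkli)

section entropy

variable [Fintype α] [DecidableEq α] [Fintype β] [DecidableEq β] [Fintype γ] [DecidableEq γ]
  (p : Ω → ℝ)

lemma cmi_eq_sum_mul_logb (hp : ∀ ω, 0 ≤ p ω)
    (U : Ω → γ) (V : Ω → β) (W : Ω → α) :
    cmi p U V W = ∑ t, prob p (fun ω => (U ω, V ω, W ω)) t *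
      logb 2 (prob p (fun ω => (U ω, V ω, W ω)) t / condIndepProb p U V W t) := by
  set T := fun ω => (U ω, V ω, W ω)
  have hterm : ∀ t, prob p T t * logb 2 (prob p T t / condIndepProb p U V W t) =
      prob p T t * logb 2 (prob p T t) + prob p T t * logb 2 (prob p W t.2.2)
        - prob p T t * logb 2 (prob p (fun ω => (U ω, W ω)) (t.1, t.2.2))
        - prob p T t * logb 2 (prob p (fun ω => (V ω, W ω)) (t.2.1, t.2.2)) := by
    rintro ⟨u, v, w⟩
    rcases (prob_nonneg p hp T (u, v, w)).eq_or_lt with hf | hf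
    · simp [← hf]
    have hUW := prob_pos_of_prob_pos p hp (S := fun ω => (U ω, W ω)) (s := (u, w))
      (fun ω h => by simp_all [T]) hf
    have hVW := prob_pos_of_prob_pos p hp (S := fun ω => (V ω, W ω)) (s := (v, w))
      (fun ω h => by simp_all [T]) hf
    have hW := prob_pos_of_prob_pos p hp (S := W) (s := w) (fun ω h => by simp_all [T]) hf
    rw [condIndepProb, logb_div hf.ne' (by positivity), logb_div (by positivity) hW.ne',
      logb_mul hUW.ne' hVW.ne']
    ring
  rw [cmi, ent_eq_sum_prob_comp p T (fun t => (t.1, t.2.2)) fun _ => rfl,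
    ent_eq_sum_prob_comp p T (fun t => (t.2.1, t.2.2)) fun _ => rfl,
    ent_eq_sum_prob_comp p T (fun t => t.2.2) fun _ => rfl,
    Finset.sum_congr rfl fun t _ => hterm t]
  simp only [ent, Finset.sum_add_distrib, Finset.sum_sub_distrib]
  ring

lemma mi_eq_sum_mul_logb (hp : ∀ ω, 0 ≤ p ω) (A : Ω → α) (B : Ω → β) :
    mi p A B = ∑ t, prob p (fun ω => (A ω, B ω)) t *
      logb 2 (prob p (fun ω => (A ω, B ω)) t / (prob p A t.1 * prob p B t.2)) := by
  set T := fun ω => (A ω, B ω)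
  have hterm : ∀ t, prob p T t * logb 2 (prob p T t / (prob p A t.1 * prob p B t.2)) =
      prob p T t * logb 2 (prob p T t) - prob p T t * logb 2 (prob p A t.1)
        - prob p T t * logb 2 (prob p B t.2) := by
    rintro ⟨a, b⟩
    rcases (prob_nonneg p hp T (a, b)).eq_or_lt with hf | hf
    · simp [← hf]
    have hA := prob_pos_of_prob_pos p hp (S := A) (s := a) (fun ω h => by simp_all [T]) hf
    have hB := prob_pos_of_prob_pos p hp (S := B) (s := b) (fun ω h => by simp_all [T]) hf
    rw [logb_div hf.ne' (by positivity), logb_mul hA.ne' hB.ne']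
    ring
  rw [mi, ent_eq_sum_prob_comp p T Prod.fst fun _ => rfl,
    ent_eq_sum_prob_comp p T Prod.snd fun _ => rfl, Finset.sum_congr rfl fun t _ => hterm t]
  simp only [ent, Finset.sum_sub_distrib]
  ring

lemma mi_eq_zero_of_indepRV (hp : ∀ ω, 0 ≤ p ω) {A : Ω → α} {B : Ω → β} (h : IndepRV p A B) :
    mi p A B = 0 := by
  rw [mi_eq_sum_mul_logb p hp]
  refine Finset.sum_eq_zero fun ⟨a, b⟩ _ => ?_
  dsimp only
  rw [h a b]
  rcases eq_or_ne (prob p A a * prob p B b) 0 with hab | hab <;> simp [hab]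

lemma sum_condIndepProb (U : Ω → γ) (V : Ω → β) (W : Ω → α) :
    ∑ t, condIndepProb p U V W t = ∑ ω, p ω := by
  have hw : ∀ w, ∑ v, ∑ u, condIndepProb p U V W (u, v, w) = prob p W w := fun w => by
    simp only [condIndepProb, ← Finset.sum_div, ← Finset.sum_mul, ← Finset.mul_sum,
      sum_prob_pair_left, mul_self_div_self]
  simp only [Fintype.sum_prod_type_right]
  rw [← sum_prob p W]
  exact Finset.sum_congr rfl fun w _ => hw w

lemma condIndepRV_of_cmi_eq_zero (hp : ∀ ω, 0 ≤ p ω) {U : Ω → γ} {V : Ω → β} {W : Ω → α}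
    (h : cmi p U V W = 0) : CondIndepRV p U V W := by
  have hlog : ∑ t, prob p (fun ω => (U ω, V ω, W ω)) t *
      log (prob p (fun ω => (U ω, V ω, W ω)) t / condIndepProb p U V W t) = 0 := by
    rw [cmi_eq_sum_mul_logb p hp] at h
    simp only [logb, mul_div_assoc', ← Finset.sum_div, div_eq_zero_iff] at h
    exact h.resolve_right (log_pos one_lt_two).ne'
  have heq := eq_of_sum_mul_log_div_eq_zero (prob_nonneg p hp _) (condIndepProb_nonneg p hp)
    (prob_eq_zero_of_condIndepProb_eq_zero p hp) (by rw [sum_prob, sum_condIndepProb]) hlog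
  intro u v w
  rcases (prob_nonneg p hp W w).eq_or_lt with hW | hW
  · rw [← hW, mul_zero, prob_eq_zero_of_imp p hp (fun ω h => by simp_all) hW.symm, zero_mul]
  · rw [heq, condIndepProb, div_mul_cancel₀ _ hW.ne']

end entropy

lemma indepRV_pair_of_condIndepRV [Fintype β] [DecidableEq α] [DecidableEq β] [DecidableEq γ]
    (p : Ω → ℝ) (hp : ∀ ω, 0 ≤ p ω) (hsum : ∑ ω, p ω = 1)
    {X : Ω → α} {Y : Ω → β} {M : Ω → γ}
    (hfull : ∀ x y, 0 < prob p (fun ω => (X ω, Y ω)) (x, y))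
    (hX : CondIndepRV p M Y X) (hY : CondIndepRV p M X Y) :
    IndepRV p M (fun ω => (X ω, Y ω)) := by
  have hX' : ∀ m x y, prob p (fun ω => (M ω, X ω, Y ω)) (m, x, y) * prob p X x =
      prob p (fun ω => (M ω, X ω)) (m, x) * prob p (fun ω => (X ω, Y ω)) (x, y) :=
    fun m x y => by
      rw [← prob_swap p X Y, ← hX m y x]
      congr 1
      exact prob_congr p fun ω => by simp only [Prod.mk.injEq]; tauto
  -- `p(m|x) = p(m|x,y) = p(m|y)`
  have hcross : ∀ m x y, prob p (fun ω => (M ω, X ω)) (m, x) * prob p Y y =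
      prob p (fun ω => (M ω, Y ω)) (m, y) * prob p X x := fun m x y =>
    mul_right_cancel₀ (hfull x y).ne'
      (by linear_combination prob p X x * hY m x y - prob p Y y * hX' m x y)
  have hMX : ∀ m x, prob p (fun ω => (M ω, X ω)) (m, x) = prob p M m * prob p X x :=
    fun m x => by
      have := Finset.sum_congr rfl fun y (_ : y ∈ Finset.univ) => hcross m x y
      rwa [← Finset.mul_sum, ← Finset.sum_mul, sum_prob, hsum, mul_one,
        sum_prob_pair_right] at this
  rintro m ⟨x, y⟩
  have hXpos : 0 < prob p X x :=
    prob_pos_of_prob_pos p hp (fun ω h => congrArg Prod.fst h) (hfull x y)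
  exact mul_right_cancel₀ hXpos.ne' (by rw [hX', hMX]; ring)

end InformationMeasures

theorem stmt7 {Ω : Type*} [Fintype Ω] {α β γ : Type*}
    [Fintype α] [DecidableEq α] [Fintype β] [DecidableEq β] [Fintype γ] [DecidableEq γ]
    (p : Ω → ℝ) (hp : ∀ ω, 0 ≤ p ω) (hsum : ∑ ω, p ω = 1)
    (X : Ω → α) (Y : Ω → β) (M : Ω → γ)
    (hfull : ∀ x y, 0 < prob p (fun ω => (X ω, Y ω)) (x, y))
    (h1 : cmi p M Y X = 0) (h2 : cmi p M X Y = 0) :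
    mi p M (fun ω => (X ω, Y ω)) = 0 :=
  mi_eq_zero_of_indepRV p hp <| indepRV_pair_of_condIndepRV p hp hsum hfull
    (condIndepRV_of_cmi_eq_zero p hp h1) (condIndepRV_of_cmi_eq_zero p hp h2)
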